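/- Define B(n,k) := Σ_{j=0}^{min(n,k)} (j!)² · S(n+1, j+1) · S(k+1, j+1) (the poly-Bernoulli number B_n^{(-k)}). Then for all integers n ≥ 0 and k ≥ 0, Σ_{ℓ=0}^{n} c(n+1, ℓ+1) · B(ℓ, k) = n! · Σ_{i=1}^{n+1} i^k. -/

import Mathlib

open Finset

/-- Stirling numbers of the second kind. -/
def stirling2 : ℕ → ℕ → ℕ
  | 0, 0 => 1
  | 0, _ + 1 => 0
  | _ + 1, 0 => 0
  | n + 1, k + 1 => (k + 1) * stirling2 n (k + 1) + stirling2 n k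

/-- Unsigned Stirling numbers of the first kind. -/
def stirling1 : ℕ → ℕ → ℕ
  | 0, 0 => 1
  | 0, _ + 1 => 0
  | _ + 1, 0 => 0
  | n + 1, k + 1 => n * stirling1 n (k + 1) + stirling1 n k

/-- The poly-Bernoulli number B_n^{(-k)}. -/
def polyBernoulli (n k : ℕ) : ℕ :=
  ∑ j ∈ Finset.range (min n k + 1),
    j.factorial ^ 2 * stirling2 (n + 1) (j + 1) * stirling2 (k + 1) (j + 1)

/-! Expanding `polyBernoulli` and exchanging the sums turns the left-hand side into
`∑ j, (j!)² S(k+1, j+1) L(n+1, j+1)`, where `L(n, j) = ∑ l, c(n, l) S(l, j)` are the Lah numbers.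
From their recurrence `L(n+1, j+1) = (n+j+1) L(n, j+1) + L(n, j)` one gets the closed form
`L(n+1, j+1) j! = n! C(n+1, j+1)`, and the expansion `x^m = ∑ j, S(m, j) x^{\underline j}` gives
the power-sum formula `∑_{i=1}^N i^k = ∑ j, S(k+1, j+1) j! C(N, j+1)`, which matches term by term. -/

open Nat

theorem stirling1_eq_stirlingFirst : stirling1 = stirlingFirst := by
  funext n k
  induction n generalizing k with
  | zero => cases k <;> simp [stirling1]
  | succ n ih => cases k <;> simp [stirling1, stirlingFirst_succ_succ, ih]

theorem stirling2_eq_stirlingSecond : stirling2 = stirlingSecond := by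
  funext n k
  induction n generalizing k with
  | zero => cases k <;> simp [stirling2]
  | succ n ih => cases k <;> simp [stirling2, stirlingSecond_succ_succ, ih]

theorem mul_descFactorial_eq_descFactorial_succ_add (x j : ℕ) :
    x * x.descFactorial j = x.descFactorial (j + 1) + j * x.descFactorial j := by
  rcases le_or_gt j x with h | h
  · rw [descFactorial_succ, ← add_mul, Nat.sub_add_cancel h]
  · rw [descFactorial_eq_zero_iff_lt.mpr h, descFactorial_eq_zero_iff_lt.mpr (by omega)]
    ring

theorem sum_stirlingSecond_mul_descFactorial (n x : ℕ) :
    ∑ j ∈ range (n + 1), stirlingSecond n j * x.descFactorial j = x ^ n := by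
  induction n with
  | zero => simp
  | succ n ih =>
    have shift : ∑ j ∈ range (n + 1), (j + 1) * stirlingSecond n (j + 1) * x.descFactorial (j + 1)
        = ∑ j ∈ range (n + 1), j * stirlingSecond n j * x.descFactorial j := by
      rw [sum_range_succ' (fun j => j * _ * _), sum_range_succ,
        stirlingSecond_eq_zero_of_lt (lt_add_one n)]
      simp
    calc ∑ j ∈ range (n + 2), stirlingSecond (n + 1) j * x.descFactorial j
        = ∑ j ∈ range (n + 1), (j + 1) * stirlingSecond n (j + 1) * x.descFactorial (j + 1)
          + ∑ j ∈ range (n + 1), stirlingSecond n j * x.descFactorial (j + 1) := by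
          simp only [sum_range_succ' _ (n + 1), stirlingSecond_succ_succ, stirlingSecond_succ_zero,
            add_mul, sum_add_distrib, zero_mul, add_zero]
      _ = ∑ j ∈ range (n + 1), stirlingSecond n j * (x * x.descFactorial j) := by
          simp only [shift, mul_descFactorial_eq_descFactorial_succ_add, ← sum_add_distrib]
          exact sum_congr rfl fun j _ => by ring
      _ = x ^ (n + 1) := by
          simp only [mul_left_comm _ x, ← mul_sum, ih, pow_succ']

theorem add_one_pow_eq_sum_stirlingSecond (m k : ℕ) :
    (m + 1) ^ k = ∑ j ∈ range (k + 1), stirlingSecond (k + 1) (j + 1) * j ! * m.choose j := by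
  have h := sum_stirlingSecond_mul_descFactorial (k + 1) (m + 1)
  simp only [sum_range_succ' _ (k + 1), stirlingSecond_succ_zero, zero_mul, add_zero,
    succ_descFactorial_succ, pow_succ'] at h
  refine Nat.eq_of_mul_eq_mul_left (by positivity : 0 < m + 1) (h.symm.trans ?_)
  rw [mul_sum]
  exact sum_congr rfl fun j _ => by rw [descFactorial_eq_factorial_mul_choose]; ring

theorem sum_Icc_pow_eq_sum_stirlingSecond (N k : ℕ) :
    ∑ i ∈ Icc 1 N, i ^ k =
      ∑ j ∈ range (k + 1), stirlingSecond (k + 1) (j + 1) * j ! * N.choose (j + 1) := by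
  induction N with
  | zero => simp
  | succ N ih =>
    rw [sum_Icc_succ_top (by omega), ih, add_one_pow_eq_sum_stirlingSecond, ← sum_add_distrib]
    exact sum_congr rfl fun j _ => by rw [choose_succ_succ']; ring

def lah (n j : ℕ) : ℕ :=
  ∑ l ∈ range (n + 1), stirlingFirst n l * stirlingSecond l j

theorem lah_succ_zero (n : ℕ) : lah (n + 1) 0 = 0 :=
  sum_eq_zero fun l _ => by cases l <;> simp [stirlingFirst_succ_zero, stirlingSecond_succ_zero]

theorem lah_succ_right (n j : ℕ) :
    lah n (j + 1) = ∑ l ∈ range n, stirlingFirst n (l + 1) * stirlingSecond (l + 1) (j + 1) := by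
  simp [lah, sum_range_succ']

theorem lah_succ_succ (n j : ℕ) :
    lah (n + 1) (j + 1) = (n + j + 1) * lah n (j + 1) + lah n j := by
  have hlah : ∑ l ∈ range (n + 1), stirlingFirst n (l + 1) * stirlingSecond (l + 1) (j + 1)
      = lah n (j + 1) := by
    rw [sum_range_succ, stirlingFirst_eq_zero_of_lt (lt_add_one n), lah_succ_right]
    simp
  rw [lah_succ_right]
  simp only [stirlingFirst_succ_succ, add_mul, sum_add_distrib, mul_assoc, ← mul_sum, hlah]
  simp only [lah, stirlingSecond_succ_succ, mul_add, sum_add_distrib, mul_left_comm _ (j + 1),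
    ← mul_sum]
  ring

theorem lah_succ_succ_mul_factorial (n j : ℕ) :
    lah (n + 1) (j + 1) * j ! = n ! * (n + 1).choose (j + 1) := by
  induction n generalizing j with
  | zero =>
    cases j <;> simp [lah, sum_range_succ, stirlingFirst_self, stirlingSecond_self,
      stirlingSecond_eq_zero_of_lt, choose_eq_zero_of_lt]
  | succ n ih =>
    cases j with
    | zero =>
      have h := ih 0
      rw [lah_succ_succ, lah_succ_zero]
      simp only [zero_add, factorial_zero, mul_one, choose_one_right] at h ⊢
      rw [h, factorial_succ]
      ring
    | succ j =>
      have ih_succ := ih (j + 1)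
      have ih_self := ih j
      have absorb_succ := add_one_mul_choose_eq n (j + 1)
      have absorb := add_one_mul_choose_eq n j
      have pascal := choose_succ_succ' n j
      rw [lah_succ_succ, choose_succ_succ' (n + 1), factorial_succ n]
      rw [factorial_succ j] at ih_succ ⊢
      -- after the induction hypotheses, what remains is
      -- `(j+2) C(n+1, j+2) + (j+1) C(n+1, j+1) = (n+1) C(n+1, j+1)`
      linear_combination (n + j + 3) * ih_succ + (j + 1) * ih_self -
        n ! * (absorb_succ + absorb + (n + 1) * pascal)

theorem polyBernoulli_eq_sum_range (l k : ℕ) :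
    polyBernoulli l k = ∑ j ∈ range (k + 1),
      j ! ^ 2 * stirlingSecond (l + 1) (j + 1) * stirlingSecond (k + 1) (j + 1) := by
  rw [polyBernoulli, stirling2_eq_stirlingSecond]
  refine sum_subset (range_subset_range.2 (by omega)) fun j hk hl => ?_
  rw [mem_range] at hk hl
  rw [stirlingSecond_eq_zero_of_lt (by omega : l + 1 < j + 1)]
  simp

theorem sum_stirlingFirst_mul_polyBernoulli (n k : ℕ) :
    ∑ l ∈ range (n + 1), stirlingFirst (n + 1) (l + 1) * polyBernoulli l k =
      ∑ j ∈ range (k + 1), j ! ^ 2 * stirlingSecond (k + 1) (j + 1) * lah (n + 1) (j + 1) := by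
  simp only [polyBernoulli_eq_sum_range, lah_succ_right, mul_sum]
  rw [sum_comm]
  exact sum_congr rfl fun j _ => sum_congr rfl fun l _ => by ring

theorem stmt9 (n k : ℕ) :
    ∑ l ∈ Finset.range (n + 1), stirling1 (n + 1) (l + 1) * polyBernoulli l k =
      n.factorial * ∑ i ∈ Finset.Icc 1 (n + 1), i ^ k := by
  rw [stirling1_eq_stirlingFirst, sum_stirlingFirst_mul_polyBernoulli,
    sum_Icc_pow_eq_sum_stirlingSecond, mul_sum]
  refine sum_congr rfl fun j _ => ?_
  linear_combination (stirlingSecond (k + 1) (j + 1) * j !) * lah_succ_succ_mul_factorial n j
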